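/- Let G be a finite tree (a finite simple undirected graph that is connected and acyclic) with vertex set V and vertex weights w : V → ℝ, and let r ∈ V. For each neighbor c of r, let C_c be the vertex set of the connected component of the induced subgraph G[V \ {r}] that contains c, and let M(c) = max{w(X) : X ⊆ C_c, c ∈ X, X a connected set of G}. Then max{w(S) : S a connected set of G with r ∈ S} = w(r) + ∑_{c ∈ N(r)} max(0, M(c)). -/

import Mathlib

open SimpleGraph

/-- `S` is a connected set of `G`: `S` is nonempty and the induced subgraph `G[S]`
is connected. -/
def ConnectedSet {V : Type*} (G : SimpleGraph V) (S : Set V) : Prop :=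
  S.Nonempty ∧ (G.induce S).Connected

namespace Stmt18Aux

set_option linter.unusedSectionVars false

variable {V : Type*} [DecidableEq V] {G : SimpleGraph V}

lemma reachable_induce {S : Set V} {x y : V} (p : G.Walk x y)
    (hp : ∀ z ∈ p.support, z ∈ S) (hx : x ∈ S) (hy : y ∈ S) :
    (G.induce S).Reachable ⟨x, hx⟩ ⟨y, hy⟩ := by
  induction p with
  | nil => exact Reachable.refl _
  | @cons u v z h q ih =>
      have hv : v ∈ S := hp v (by simp)
      have hadj : (G.induce S).Adj ⟨u, hx⟩ ⟨v, hv⟩ := h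
      exact hadj.reachable.trans (ih (fun z hz => hp z (by simp [hz])) hv hy)

lemma walk_of_reachable {S : Set V} {a b : S} (h : (G.induce S).Reachable a b) :
    ∃ p : G.Walk a.1 b.1, ∀ z ∈ p.support, z ∈ S := by
  obtain ⟨q⟩ := h
  refine ⟨q.map (SimpleGraph.Embedding.induce S).toHom, fun z hz => ?_⟩
  erw [Walk.support_map, List.mem_map] at hz
  obtain ⟨a, -, rfl⟩ := hz
  exact a.2

lemma connectedSet_iff {S : Set V} :
    ConnectedSet G S ↔ S.Nonempty ∧
      ∀ x ∈ S, ∀ y ∈ S, ∃ p : G.Walk x y, ∀ z ∈ p.support, z ∈ S := by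
  constructor
  · rintro ⟨hne, hc⟩
    exact ⟨hne, fun x hx y hy => walk_of_reachable (hc.preconnected ⟨x, hx⟩ ⟨y, hy⟩)⟩
  · rintro ⟨hne, hw⟩
    haveI : Nonempty S := ⟨⟨hne.choose, hne.choose_spec⟩⟩
    refine ⟨hne, ⟨?_⟩⟩
    rintro ⟨x, hx⟩ ⟨y, hy⟩
    obtain ⟨p, hp⟩ := hw x hx y hy
    exact reachable_induce p hp hx hy

lemma connectedSet_singleton (G : SimpleGraph V) (v : V) : ConnectedSet G {v} := by
  rw [connectedSet_iff]
  refine ⟨⟨v, rfl⟩, ?_⟩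
  rintro x rfl y rfl
  exact ⟨Walk.nil, by simp⟩

/-- Component of `G - r` containing `c`. -/
def comp (G : SimpleGraph V) (r c : V) : Set V :=
  {y : V | ∃ p : G.Walk c y, r ∉ p.support}

lemma not_mem_comp {r c : V} : r ∉ comp G r c := by
  rintro ⟨p, hp⟩; exact hp p.end_mem_support

lemma mem_comp_self {r c : V} (h : r ≠ c) : c ∈ comp G r c :=
  ⟨Walk.nil, by simpa using h⟩

lemma mem_comp_of_mem_support {r c y z : V} (p : G.Walk c y) (hp : r ∉ p.support)
    (hz : z ∈ p.support) : z ∈ comp G r c :=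
  ⟨p.takeUntil z hz, fun h => hp (p.support_takeUntil_subset hz h)⟩

lemma comp_disjoint (hacyc : G.IsAcyclic) {r c c' : V} (hc : G.Adj r c)
    (hc' : G.Adj r c') (hne : c ≠ c') : Disjoint (comp G r c) (comp G r c') := by
  rw [Set.disjoint_left]
  rintro y ⟨p, hp⟩ ⟨q, hq⟩
  have hrt : r ∉ (p.append q.reverse).support := by
    rw [Walk.mem_support_append_iff]
    push_neg
    exact ⟨hp, by simpa using hq⟩
  have htp : (p.append q.reverse).bypass.IsPath := Walk.bypass_isPath _
  have hrt' : r ∉ (p.append q.reverse).bypass.support :=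
    fun h => hrt (Walk.support_bypass_subset _ h)
  have hp2 : (Walk.cons hc.symm (Walk.cons hc' Walk.nil) : G.Walk c c').IsPath := by
    simp [Walk.isPath_def, hc.ne', hne, hc'.ne]
  have huniq := isAcyclic_iff_path_unique.mp hacyc ⟨_, htp⟩ ⟨_, hp2⟩
  apply hrt'
  have heq : (p.append q.reverse).bypass = Walk.cons hc.symm (Walk.cons hc' Walk.nil) :=
    congrArg Subtype.val huniq
  rw [heq]; simp

lemma exists_nbr {S : Set V} {r y : V}
    (hw : ∀ x ∈ S, ∀ y ∈ S, ∃ p : G.Walk x y, ∀ z ∈ p.support, z ∈ S)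
    (hr : r ∈ S) (hy : y ∈ S) (hyr : y ≠ r) :
    ∃ c, G.Adj r c ∧ y ∈ comp G r c ∧
      ∃ q : G.Walk c y, (r ∉ q.support ∧ ∀ z ∈ q.support, z ∈ S) := by
  obtain ⟨p0, hp0⟩ := hw r hr y hy
  have hsub : ∀ z ∈ p0.bypass.support, z ∈ S :=
    fun z hz => hp0 z (Walk.support_bypass_subset _ hz)
  have hpath : p0.bypass.IsPath := Walk.bypass_isPath _
  set p := p0.bypass with hp
  clear_value p
  clear hp hp0
  cases p with
  | nil => exact absurd rfl hyr
  | @cons _ v _ h q =>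
      rw [Walk.cons_isPath_iff] at hpath
      refine ⟨v, h, ⟨q, hpath.2⟩, q, hpath.2, fun z hz => hsub z (by simp [hz])⟩

lemma walk_in_inter (hacyc : G.IsAcyclic) {S : Set V} {r c : V}
    (hw : ∀ x ∈ S, ∀ y ∈ S, ∃ p : G.Walk x y, ∀ z ∈ p.support, z ∈ S)
    (hr : r ∈ S) (hc : G.Adj r c) {y : V} (hy : y ∈ S ∩ comp G r c) :
    ∃ q : G.Walk c y, ∀ z ∈ q.support, z ∈ S ∩ comp G r c := by
  have hyr : y ≠ r := fun h => not_mem_comp (h ▸ hy.2)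
  obtain ⟨c', hc', hyc', q, hqr, hqS⟩ := exists_nbr hw hr hy.1 hyr
  have hcc : c' = c := by
    by_contra hne
    exact Set.disjoint_left.mp (comp_disjoint hacyc hc' hc hne) hyc' hy.2
  subst hcc
  exact ⟨q, fun z hz => ⟨hqS z hz, mem_comp_of_mem_support q hqr hz⟩⟩

lemma inter_connectedSet (hacyc : G.IsAcyclic) {S : Set V} {r c : V}
    (hw : ∀ x ∈ S, ∀ y ∈ S, ∃ p : G.Walk x y, ∀ z ∈ p.support, z ∈ S)
    (hr : r ∈ S) (hc : G.Adj r c) (hne : (S ∩ comp G r c).Nonempty) :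
    c ∈ S ∩ comp G r c ∧ ConnectedSet G (S ∩ comp G r c) := by
  obtain ⟨y0, hy0⟩ := hne
  obtain ⟨q0, hq0⟩ := walk_in_inter hacyc hw hr hc hy0
  have hcmem : c ∈ S ∩ comp G r c := hq0 c q0.start_mem_support
  refine ⟨hcmem, connectedSet_iff.mpr ⟨⟨c, hcmem⟩, ?_⟩⟩
  intro x hx y hy
  obtain ⟨qx, hqx⟩ := walk_in_inter hacyc hw hr hc hx
  obtain ⟨qy, hqy⟩ := walk_in_inter hacyc hw hr hc hy
  refine ⟨qx.reverse.append qy, fun z hz => ?_⟩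
  rw [Walk.mem_support_append_iff] at hz
  rcases hz with hz | hz
  · exact hqx z (by simpa using hz)
  · exact hqy z hz

lemma partition [Fintype V] {S : Set V} {r : V} [DecidableRel G.Adj]
    (hw : ∀ x ∈ S, ∀ y ∈ S, ∃ p : G.Walk x y, ∀ z ∈ p.support, z ∈ S)
    (hr : r ∈ S) :
    S = insert r (⋃ c ∈ (↑(G.neighborFinset r) : Set V), S ∩ comp G r c) := by
  ext y
  constructor
  · intro hy
    rcases eq_or_ne y r with rfl | hyr
    · exact Set.mem_insert _ _
    · obtain ⟨c, hc, hyc, -⟩ := exists_nbr hw hr hy hyr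
      refine Set.mem_insert_of_mem _ ?_
      rw [Set.mem_iUnion₂]
      exact ⟨c, by simpa using hc, hy, hyc⟩
  · rintro (rfl | hy)
    · exact hr
    · rw [Set.mem_iUnion₂] at hy
      obtain ⟨c, -, hy, -⟩ := hy
      exact hy

lemma weight_split [Fintype V] (w : V → ℝ) (r : V) (N : Finset V) (t : V → Set V)
    (hr : ∀ c ∈ N, r ∉ t c) (hd : (↑N : Set V).PairwiseDisjoint t) :
    ∑ᶠ y ∈ insert r (⋃ c ∈ (↑N : Set V), t c), w y
      = w r + ∑ c ∈ N, ∑ᶠ y ∈ t c, w y := by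
  rw [Set.insert_eq]
  rw [finsum_mem_union ?disj (Set.finite_singleton r) (Set.toFinite _), finsum_mem_singleton,
    finsum_mem_biUnion hd (Set.toFinite _) (fun i _ => Set.toFinite _), finsum_mem_coe_finset]
  case disj =>
    rw [Set.disjoint_left]
    rintro x rfl hx
    rw [Set.mem_iUnion₂] at hx
    obtain ⟨c, hcN, hc⟩ := hx
    exact hr c (by simpa using hcN) hc

end Stmt18Aux

open Stmt18Aux

/-- Dynamic program on trees: if `G` is a tree and `r` a vertex, then the maximum
weight of a connected set containing `r` equals `w(r)` plus the sum, over all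
neighbors `c` of `r`, of `max(0, M(c))`, where `M(c)` is the maximum weight of a
connected set containing `c` inside the component of `G − r` containing `c`. -/
theorem stmt18 {V : Type*} [Fintype V] [DecidableEq V] (G : SimpleGraph V)
    [DecidableRel G.Adj] (hconn : G.Connected) (hacyc : G.IsAcyclic)
    (w : V → ℝ) (r : V) :
    sSup {x : ℝ | ∃ S : Set V, ConnectedSet G S ∧ r ∈ S ∧ x = ∑ᶠ y ∈ S, w y} =
      w r + ∑ c ∈ G.neighborFinset r,
        max 0 (sSup {x : ℝ | ∃ X : Set V,
          X ⊆ {y : V | ∃ p : G.Walk c y, r ∉ p.support} ∧ c ∈ X ∧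
          ConnectedSet G X ∧ x = ∑ᶠ y ∈ X, w y}) := by
  classical
  set A : Set ℝ := {x : ℝ | ∃ S : Set V, ConnectedSet G S ∧ r ∈ S ∧ x = ∑ᶠ y ∈ S, w y} with hA
  set B : V → Set ℝ := fun c => {x : ℝ | ∃ X : Set V,
      X ⊆ comp G r c ∧ c ∈ X ∧ ConnectedSet G X ∧ x = ∑ᶠ y ∈ X, w y} with hB
  show sSup A = w r + ∑ c ∈ G.neighborFinset r, max 0 (sSup (B c))
  -- finiteness and nonemptiness
  have hAfin : A.Finite := by
    apply (Set.finite_range (fun S : Set V => ∑ᶠ y ∈ S, w y)).subset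
    rintro x ⟨S, -, -, rfl⟩
    exact Set.mem_range_self S
  have hBfin : ∀ c, (B c).Finite := by
    intro c
    apply (Set.finite_range (fun S : Set V => ∑ᶠ y ∈ S, w y)).subset
    rintro x ⟨S, -, -, -, rfl⟩
    exact Set.mem_range_self S
  have hAne : A.Nonempty :=
    ⟨∑ᶠ y ∈ ({r} : Set V), w y, {r}, connectedSet_singleton G r, rfl, rfl⟩
  have hBne : ∀ c ∈ G.neighborFinset r, (B c).Nonempty := by
    intro c hc
    rw [mem_neighborFinset] at hc
    exact ⟨∑ᶠ y ∈ ({c} : Set V), w y, {c},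
      by rintro x rfl; exact mem_comp_self hc.ne, rfl, connectedSet_singleton G c, rfl⟩
  -- upper bound
  have h1 : sSup A ≤ w r + ∑ c ∈ G.neighborFinset r, max 0 (sSup (B c)) := by
    apply csSup_le hAne
    rintro x ⟨S, hS, hr, rfl⟩
    obtain ⟨-, hw⟩ := connectedSet_iff.mp hS
    have hpart := partition (G := G) hw hr
    rw [hpart, weight_split w r _ _ (fun c _ => fun h => not_mem_comp h.2)
      (fun c hc c' hc' hne => (comp_disjoint hacyc
        (by simpa using hc) (by simpa using hc') hne).mono
        Set.inter_subset_right Set.inter_subset_right)]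
    gcongr with c hc
    rw [mem_neighborFinset] at hc
    rcases Set.eq_empty_or_nonempty (S ∩ comp G r c) with he | hne
    · rw [he, finsum_mem_empty]
      exact le_max_left _ _
    · obtain ⟨hcmem, hconn'⟩ := inter_connectedSet hacyc hw hr hc hne
      refine le_trans (le_csSup (hBfin c).bddAbove ?_) (le_max_right _ _)
      exact ⟨S ∩ comp G r c, Set.inter_subset_right, hcmem, hconn', rfl⟩
  -- attainment
  have h2 : w r + ∑ c ∈ G.neighborFinset r, max 0 (sSup (B c)) ∈ A := by
    have hch : ∀ c : V, ∃ X : Set V, X ⊆ comp G r c ∧ r ∉ X ∧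
        (X.Nonempty → (c ∈ X ∧ ConnectedSet G X)) ∧
        (c ∈ G.neighborFinset r → max 0 (sSup (B c)) = ∑ᶠ y ∈ X, w y) := by
      intro c
      by_cases hc : c ∈ G.neighborFinset r
      · by_cases h0 : 0 ≤ sSup (B c)
        · obtain ⟨X, hsub, hcX, hconnX, hval⟩ :=
            Set.Nonempty.csSup_mem (hBne c hc) (hBfin c)
          exact ⟨X, hsub, fun h => not_mem_comp (hsub h),
            fun _ => ⟨hcX, hconnX⟩, fun _ => by rw [max_eq_right h0]; exact hval⟩
        · refine ⟨∅, Set.empty_subset _, id, fun h => absurd h (by simp), fun _ => ?_⟩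
          rw [max_eq_left (le_of_not_ge h0), finsum_mem_empty]
      · exact ⟨∅, Set.empty_subset _, id, fun h => absurd h (by simp),
          fun h => absurd h hc⟩
    choose T hT1 hT2 hT3 hT4 using hch
    set S : Set V := insert r (⋃ c ∈ (↑(G.neighborFinset r) : Set V), T c) with hSdef
    have hrS : r ∈ S := Set.mem_insert _ _
    have hwalk : ∀ z ∈ S, ∃ p : G.Walk r z, ∀ u ∈ p.support, u ∈ S := by
      rintro z (rfl | hz)
      · exact ⟨Walk.nil, by rintro u hu; simp at hu; subst hu; exact hrS⟩
      · rw [Set.mem_iUnion₂] at hz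
        obtain ⟨c, hcN, hzc⟩ := hz
        have hadj : G.Adj r c := by
          rw [← mem_neighborFinset]; exact_mod_cast hcN
        obtain ⟨hcT, hTconn⟩ := hT3 c ⟨z, hzc⟩
        obtain ⟨-, hw'⟩ := connectedSet_iff.mp hTconn
        obtain ⟨q, hq⟩ := hw' c hcT z hzc
        refine ⟨Walk.cons hadj q, ?_⟩
        intro u hu
        rw [Walk.support_cons, List.mem_cons] at hu
        rcases hu with rfl | hu
        · exact hrS
        · refine Set.mem_insert_of_mem _ ?_
          rw [Set.mem_iUnion₂]
          exact ⟨c, hcN, hq u hu⟩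
    have hSconn : ConnectedSet G S := by
      rw [connectedSet_iff]
      refine ⟨⟨r, hrS⟩, fun x hx y hy => ?_⟩
      obtain ⟨px, hpx⟩ := hwalk x hx
      obtain ⟨py, hpy⟩ := hwalk y hy
      refine ⟨px.reverse.append py, fun z hz => ?_⟩
      rw [Walk.mem_support_append_iff] at hz
      rcases hz with hz | hz
      · exact hpx z (by simpa using hz)
      · exact hpy z hz
    refine ⟨S, hSconn, hrS, ?_⟩
    rw [hSdef, weight_split w r _ _ (fun c _ => hT2 c)
      (fun c hc c' hc' hne => Set.disjoint_of_subset (hT1 c) (hT1 c')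
        (comp_disjoint hacyc (by simpa using hc) (by simpa using hc') hne))]
    congr 1
    exact Finset.sum_congr rfl fun c hc => hT4 c hc
  exact le_antisymm h1 (le_csSup hAfin.bddAbove h2)
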